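/- Let X_1, …, X_n (n ≥ 2) be i.i.d. real random variables with finite fourth moment, mean μ and variance v. Then the sample variance s² := (1/(n−1)) Σ_{i=1}^n (X_i − X̄)² satisfies E[(s² − v)²] ≤ (4/n)·E[(X_1 − μ)⁴]. -/

import Mathlib

/-!
Centre the sample at `m`: with `Y i = X i - m`, the identity
`s² - v = (1/n) ∑ i, (Y i ^ 2 - v) - 2/(n(n-1)) ∑ k, Y k * ∑ i < k, Y i`
(the Hoeffding decomposition of the U-statistic `s²`) splits `s² - v` into two sums of
orthogonal terms: the independent centred variables `Y i ^ 2 - v`, and the martingale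
differences `Y k * ∑ i < k, Y i`. Their second moments are therefore `n (E Y⁴ - v²)` and
`v² n(n-1)/2`, and `(a - b)² ≤ 2a² + 2b²` together with `v² ≤ E Y⁴` gives `4 E Y⁴ / n`.
-/

open MeasureTheory ProbabilityTheory

section SampleVariance

open Finset

theorem sq_sum_eq_sum_sq_add_two_mul_sum_Iio {ι : Type*} [Fintype ι] [LinearOrder ι]
    [LocallyFiniteOrderBot ι] (y : ι → ℝ) :
    (∑ i, y i) ^ 2 = ∑ i, y i ^ 2 + 2 * ∑ k, y k * ∑ i ∈ Iio k, y i := by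
  have hsplit : ∀ k i, y k * y i = (if i < k then y k * y i else 0)
      + (if k = i then y k * y i else 0) + (if k < i then y k * y i else 0) := by
    intro k i
    rcases lt_trichotomy i k with h | rfl | h
    · simp [h, h.ne', h.not_gt]
    · simp
    · simp [h, h.ne, h.not_gt]
  have hupper : ∑ k, ∑ i, (if k < i then y k * y i else 0)
      = ∑ k, ∑ i, (if i < k then y k * y i else 0) := by
    rw [sum_comm]
    simp only [mul_comm]
  rw [sq, sum_mul_sum, sum_congr rfl fun k _ => sum_congr rfl fun i _ =>
    hsplit k i]
  simp only [sum_add_distrib]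
  rw [hupper]
  simp only [sum_ite_eq, mem_univ, if_true, ← sum_filter,
    filter_gt_eq_Iio, ← mul_sum, ← sq]
  ring

theorem sum_sub_mean_sq {ι : Type*} [Fintype ι] (x : ι → ℝ) (m : ℝ) :
    ∑ i, (x i - (1 / (Fintype.card ι : ℝ)) * ∑ j, x j) ^ 2
      = ∑ i, (x i - m) ^ 2 - (∑ i, (x i - m)) ^ 2 / Fintype.card ι := by
  rcases isEmpty_or_nonempty ι with hι | hι
  · simp
  have hn : (Fintype.card ι : ℝ) ≠ 0 := by positivity
  have hcentered : ∀ y : ι → ℝ, ∑ i, (y i - (1 / (Fintype.card ι : ℝ)) * ∑ j, y j) ^ 2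
      = ∑ i, y i ^ 2 - (∑ i, y i) ^ 2 / Fintype.card ι := by
    intro y
    simp only [sub_sq, sum_add_distrib, sum_sub_distrib, ← sum_mul,
      ← mul_sum, sum_const, card_univ, nsmul_eq_mul]
    field_simp
    ring
  have hshift : ∀ i, x i - (1 / (Fintype.card ι : ℝ)) * ∑ j, x j
      = (x i - m) - (1 / (Fintype.card ι : ℝ)) * ∑ j, (x j - m) := by
    intro i
    rw [sum_sub_distrib, sum_const, card_univ, nsmul_eq_mul]
    field_simp
    ring
  simp only [hshift]
  exact hcentered fun i => x i - m

theorem sampleVariance_sub_eq_hoeffding_decomposition {ι : Type*} [Fintype ι] [LinearOrder ι]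
    [LocallyFiniteOrderBot ι]
    (hcard : 2 ≤ Fintype.card ι) (x : ι → ℝ) (m v : ℝ) :
    1 / ((Fintype.card ι : ℝ) - 1) * ∑ i, (x i - 1 / (Fintype.card ι : ℝ) * ∑ j, x j) ^ 2 - v
      = 1 / (Fintype.card ι : ℝ) * ∑ i, ((x i - m) ^ 2 - v)
        - 2 / ((Fintype.card ι : ℝ) * (Fintype.card ι - 1))
          * ∑ k, (x k - m) * ∑ i ∈ Iio k, (x i - m) := by
  have hN : (2 : ℝ) ≤ Fintype.card ι := by exact_mod_cast hcard
  have hN0 : (Fintype.card ι : ℝ) ≠ 0 := by linarith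
  have hN1 : (Fintype.card ι : ℝ) - 1 ≠ 0 := by linarith
  rw [sum_sub_mean_sq x m, sq_sum_eq_sum_sq_add_two_mul_sum_Iio fun i => x i - m,
    sum_sub_distrib, sum_const, card_univ, nsmul_eq_mul]
  field_simp
  ring

theorem two_mul_sum_card_Iio {ι : Type*} [Fintype ι] [LinearOrder ι] [LocallyFiniteOrderBot ι] :
    2 * ∑ k : ι, (#(Iio k) : ℝ) = (Fintype.card ι : ℝ) * (Fintype.card ι - 1) := by
  have h := sq_sum_eq_sum_sq_add_two_mul_sum_Iio fun _ : ι => (1 : ℝ)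
  simp only [sum_const, card_univ, nsmul_eq_mul, mul_one, one_pow, one_mul] at h
  linarith

instance : ENNReal.HolderTriple 4 4 2 where
  inv_add_inv_eq_inv := by
    rw [show (4 : ENNReal) = 2 * 2 by norm_num, ENNReal.mul_inv (by simp) (by simp), ← add_mul,
      ENNReal.inv_two_add_inv_two, one_mul]

variable {Ω : Type*} [MeasurableSpace Ω] {μ : Measure Ω}

theorem MeasureTheory.MemLp.sq_of_four {Y : Ω → ℝ} (hY : MemLp Y 4 μ) :
    MemLp (fun ω => Y ω ^ 2) 2 μ := by
  simpa only [sq] using hY.mul' hY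

theorem integral_sub_sq_le {f g : Ω → ℝ} (hf : MemLp f 2 μ) (hg : MemLp g 2 μ) :
    ∫ ω, (f ω - g ω) ^ 2 ∂μ ≤ 2 * ∫ ω, f ω ^ 2 ∂μ + 2 * ∫ ω, g ω ^ 2 ∂μ := by
  have hint : Integrable (fun ω => 2 * f ω ^ 2 + 2 * g ω ^ 2) μ :=
    (hf.integrable_sq.const_mul 2).add (hg.integrable_sq.const_mul 2)
  calc ∫ ω, (f ω - g ω) ^ 2 ∂μ ≤ ∫ ω, (2 * f ω ^ 2 + 2 * g ω ^ 2) ∂μ :=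
        integral_mono_of_nonneg (.of_forall fun ω => sq_nonneg _) hint
          (.of_forall fun ω => by nlinarith [sq_nonneg (f ω + g ω)])
    _ = 2 * ∫ ω, f ω ^ 2 ∂μ + 2 * ∫ ω, g ω ^ 2 ∂μ := by
        rw [integral_add (hf.integrable_sq.const_mul 2) (hg.integrable_sq.const_mul 2),
          integral_const_mul, integral_const_mul]

theorem variance_sq_eq_integral_pow_four_sub [IsProbabilityMeasure μ] {Y : Ω → ℝ}
    (hY : MemLp Y 4 μ) :
    Var[fun ω => Y ω ^ 2; μ] = ∫ ω, Y ω ^ 4 ∂μ - (∫ ω, Y ω ^ 2 ∂μ) ^ 2 := by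
  rw [variance_eq_sub hY.sq_of_four]
  simp only [Pi.pow_apply, ← pow_mul]

theorem integral_sum_sq_of_pairwise_orthogonal {ι : Type*} {s : Finset ι} {f : ι → Ω → ℝ}
    (hf : ∀ i ∈ s, MemLp (f i) 2 μ)
    (horth : (s : Set ι).Pairwise fun i j => ∫ ω, f i ω * f j ω ∂μ = 0) :
    ∫ ω, (∑ i ∈ s, f i ω) ^ 2 ∂μ = ∑ i ∈ s, ∫ ω, f i ω ^ 2 ∂μ := by
  have hint : ∀ i ∈ s, ∀ j ∈ s, Integrable (fun ω => f i ω * f j ω) μ :=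
    fun i hi j hj => (hf i hi).integrable_mul (hf j hj)
  simp_rw [sq, sum_mul_sum]
  rw [integral_finsetSum _ fun i hi => integrable_finsetSum _ fun j hj => hint i hi j hj]
  refine sum_congr rfl fun i hi => ?_
  rw [integral_finsetSum _ fun j hj => hint i hi j hj]
  exact sum_eq_single_of_mem i hi fun j hj hji => horth hi hj (Ne.symm hji)

theorem ProbabilityTheory.iIndepFun.indepFun_of_dependsOn {ι β γ : Type*} [DecidableEq ι]
    [MeasurableSpace β] [MeasurableSpace γ] [Nonempty β] {Y : ι → Ω → β} (hindep : iIndepFun Y μ)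
    (hY : ∀ i, AEMeasurable (Y i) μ) {a : ι} {S : Finset ι} (ha : a ∉ S)
    {F : (ι → β) → γ} (hF : Measurable F) (hFS : DependsOn F (S : Set ι)) :
    IndepFun (Y a) (fun ω => F fun i => Y i ω) μ := by
  obtain ⟨b⟩ := ‹Nonempty β›
  let extend : (S → β) → ι → β := fun w i => if h : i ∈ S then w ⟨i, h⟩ else b
  have hextend : Measurable extend := by
    refine measurable_pi_lambda _ fun i => ?_
    by_cases h : i ∈ S
    · simpa [extend, h] using measurable_pi_apply (⟨i, h⟩ : S)
    · simp [extend, h]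
  have hfactor : (fun ω => F fun i => Y i ω) = (F ∘ extend) ∘ fun ω (i : S) => Y i ω := by
    funext ω
    exact hFS fun i hi => by simp [extend, mem_coe.mp hi]
  have hpoint : Y a = (fun w : ({a} : Finset ι) → β => w ⟨a, mem_singleton_self a⟩) ∘
      fun ω (i : ({a} : Finset ι)) => Y i ω := rfl
  rw [hfactor, hpoint]
  exact (hindep.indepFun_finset₀ {a} S (disjoint_singleton_left.mpr ha) hY).comp
    (measurable_pi_apply _) (hF.comp hextend)

section IndependentFamily

variable {ι : Type*} {Y : ι → Ω → ℝ} {v : ℝ}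

theorem memLp_mul_sum (hL4 : ∀ i, MemLp (Y i) 4 μ) (k : ι) (s : Finset ι) :
    MemLp (fun ω => Y k ω * ∑ i ∈ s, Y i ω) 2 μ :=
  (memLp_finsetSum _ fun i _ => hL4 i).mul' (hL4 k)

theorem integral_sum_sq_eq_card_mul (s : Finset ι) (hindep : iIndepFun Y μ)
    (hL2 : ∀ i, MemLp (Y i) 2 μ) (h0 : ∀ i, ∫ ω, Y i ω ∂μ = 0)
    (hv : ∀ i, ∫ ω, Y i ω ^ 2 ∂μ = v) :
    ∫ ω, (∑ i ∈ s, Y i ω) ^ 2 ∂μ = #s * v := by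
  rw [integral_sum_sq_of_pairwise_orthogonal (fun i _ => hL2 i)]
  · simp [hv]
  · intro i _ j _ hij
    rw [(hindep.indepFun hij).integral_fun_mul_eq_mul_integral (hL2 i).aestronglyMeasurable
      (hL2 j).aestronglyMeasurable, h0 i, zero_mul]

theorem integral_mul_sum_Iio_mul_eq_zero [LinearOrder ι] [LocallyFiniteOrderBot ι]
    (hindep : iIndepFun Y μ) (hY : ∀ i, AEMeasurable (Y i) μ) (h0 : ∀ i, ∫ ω, Y i ω ∂μ = 0)
    {k l : ι} (hkl : k < l) :
    ∫ ω, (Y k ω * ∑ i ∈ Iio k, Y i ω) * (Y l ω * ∑ i ∈ Iio l, Y i ω) ∂μ = 0 := by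
  have hind := hindep.indepFun_of_dependsOn hY notMem_Iio_self
    (F := fun x => x k * (∑ i ∈ Iio k, x i) * ∑ i ∈ Iio l, x i) (by fun_prop) fun x y hxy => by
      have h : ∀ i ∈ Iio l, x i = y i := fun i hi => hxy i (mem_coe.mpr hi)
      simp only [h k (mem_Iio.mpr hkl), sum_congr rfl h,
        sum_congr rfl fun i hi => h i (Iio_subset_Iio hkl.le hi)]
  have hpast : ∀ j, AEStronglyMeasurable (fun ω => ∑ i ∈ Iio j, Y i ω) μ := fun j =>
    (aemeasurable_fun_sum _ fun i _ => hY i).aestronglyMeasurable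
  calc ∫ ω, (Y k ω * ∑ i ∈ Iio k, Y i ω) * (Y l ω * ∑ i ∈ Iio l, Y i ω) ∂μ
      = ∫ ω, Y l ω * (Y k ω * (∑ i ∈ Iio k, Y i ω) * ∑ i ∈ Iio l, Y i ω) ∂μ := by
        congr 1; funext ω; ring
    _ = 0 := by
        rw [hind.integral_fun_mul_eq_mul_integral (hY l).aestronglyMeasurable
          (((hY k).aestronglyMeasurable.mul (hpast k)).mul (hpast l)), h0 l, zero_mul]

variable [IsProbabilityMeasure μ]

theorem integral_sum_sq_sub_sq (s : Finset ι) (hindep : iIndepFun Y μ)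
    (hL4 : ∀ i, MemLp (Y i) 4 μ) (hv : ∀ i, ∫ ω, Y i ω ^ 2 ∂μ = v) :
    ∫ ω, (∑ i ∈ s, (Y i ω ^ 2 - v)) ^ 2 ∂μ = ∑ i ∈ s, (∫ ω, Y i ω ^ 4 ∂μ - v ^ 2) := by
  have hL2 : ∀ i, MemLp (fun ω => Y i ω ^ 2 - v) 2 μ :=
    fun i => (hL4 i).sq_of_four.sub (memLp_const v)
  have hcentered : ∀ i, ∫ ω, (Y i ω ^ 2 - v) ∂μ = 0 := fun i => by
    rw [integral_sub ((hL4 i).sq_of_four.integrable one_le_two) (integrable_const v), hv i]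
    simp
  rw [integral_sum_sq_of_pairwise_orthogonal (fun i _ => hL2 i)]
  · refine sum_congr rfl fun i _ => ?_
    rw [← hv i, ← variance_sq_eq_integral_pow_four_sub (hL4 i),
      variance_eq_integral (hL4 i).sq_of_four.aestronglyMeasurable.aemeasurable]
  · intro i _ j _ hij
    have hind : IndepFun (fun ω => Y i ω ^ 2 - v) (fun ω => Y j ω ^ 2 - v) μ :=
      (hindep.indepFun hij).comp (φ := fun x => x ^ 2 - v) (ψ := fun x => x ^ 2 - v)
        (by fun_prop) (by fun_prop)
    rw [hind.integral_fun_mul_eq_mul_integral (hL2 i).aestronglyMeasurable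
      (hL2 j).aestronglyMeasurable, hcentered i, zero_mul]

theorem integral_mul_sum_Iio_sq [LinearOrder ι] [LocallyFiniteOrderBot ι]
    (hindep : iIndepFun Y μ) (hL4 : ∀ i, MemLp (Y i) 4 μ) (h0 : ∀ i, ∫ ω, Y i ω ∂μ = 0)
    (hv : ∀ i, ∫ ω, Y i ω ^ 2 ∂μ = v) (k : ι) :
    ∫ ω, (Y k ω * ∑ i ∈ Iio k, Y i ω) ^ 2 ∂μ = v ^ 2 * #(Iio k) := by
  have hind := hindep.indepFun_of_dependsOn (fun i => (hL4 i).1.aemeasurable) notMem_Iio_self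
    (F := fun x => ∑ i ∈ Iio k, x i) (by fun_prop)
    fun x y hxy => sum_congr rfl fun i hi => hxy i (mem_coe.mpr hi)
  have hsq : IndepFun (fun ω => Y k ω ^ 2) (fun ω => (∑ i ∈ Iio k, Y i ω) ^ 2) μ :=
    hind.comp (φ := fun x => x ^ 2) (ψ := fun x => x ^ 2) (by fun_prop) (by fun_prop)
  have hpast : MemLp (fun ω => ∑ i ∈ Iio k, Y i ω) 4 μ := memLp_finsetSum _ fun i _ => hL4 i
  simp_rw [mul_pow]
  rw [hsq.integral_fun_mul_eq_mul_integral (hL4 k).sq_of_four.1 hpast.sq_of_four.1, hv k,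
    integral_sum_sq_eq_card_mul _ hindep (fun i => (hL4 i).mono_exponent (by norm_num)) h0 hv]
  ring

theorem integral_sum_mul_sum_Iio_sq [Fintype ι] [LinearOrder ι] [LocallyFiniteOrderBot ι]
    (hindep : iIndepFun Y μ) (hL4 : ∀ i, MemLp (Y i) 4 μ) (h0 : ∀ i, ∫ ω, Y i ω ∂μ = 0)
    (hv : ∀ i, ∫ ω, Y i ω ^ 2 ∂μ = v) :
    ∫ ω, (∑ k, Y k ω * ∑ i ∈ Iio k, Y i ω) ^ 2 ∂μ = v ^ 2 * ∑ k : ι, (#(Iio k) : ℝ) := by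
  have hY : ∀ i, AEMeasurable (Y i) μ := fun i => (hL4 i).1.aemeasurable
  rw [integral_sum_sq_of_pairwise_orthogonal (fun k _ => memLp_mul_sum hL4 k _), mul_sum]
  · exact sum_congr rfl fun k _ => integral_mul_sum_Iio_sq hindep hL4 h0 hv k
  · intro k _ l _ hkl
    rcases hkl.lt_or_gt with hkl | hlk
    · exact integral_mul_sum_Iio_mul_eq_zero hindep hY h0 hkl
    · simpa only [mul_comm] using integral_mul_sum_Iio_mul_eq_zero hindep hY h0 hlk

theorem integral_hoeffding_decomposition_sq_le [Fintype ι] [LinearOrder ι]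
    [LocallyFiniteOrderBot ι] (hcard : 2 ≤ Fintype.card ι) (hindep : iIndepFun Y μ)
    (hL4 : ∀ i, MemLp (Y i) 4 μ) (h0 : ∀ i, ∫ ω, Y i ω ∂μ = 0)
    (hv : ∀ i, ∫ ω, Y i ω ^ 2 ∂μ = v) {β : ℝ} (hβ : ∀ i, ∫ ω, Y i ω ^ 4 ∂μ = β) :
    ∫ ω, (1 / (Fintype.card ι : ℝ) * ∑ i, (Y i ω ^ 2 - v)
      - 2 / ((Fintype.card ι : ℝ) * (Fintype.card ι - 1))
        * ∑ k, Y k ω * ∑ i ∈ Iio k, Y i ω) ^ 2 ∂μ ≤ 4 / Fintype.card ι * β := by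
  obtain ⟨i₀⟩ : Nonempty ι := Fintype.card_pos_iff.mp (by omega)
  have hvβ : v ^ 2 ≤ β := by
    have := variance_nonneg (fun ω => Y i₀ ω ^ 2) μ
    rw [variance_sq_eq_integral_pow_four_sub (hL4 i₀), hβ, hv] at this
    linarith
  have hN : (2 : ℝ) ≤ Fintype.card ι := by exact_mod_cast hcard
  have hA : MemLp (fun ω => ∑ i, (Y i ω ^ 2 - v)) 2 μ :=
    memLp_finsetSum _ fun i _ => (hL4 i).sq_of_four.sub (memLp_const v)
  have hP : MemLp (fun ω => ∑ k, Y k ω * ∑ i ∈ Iio k, Y i ω) 2 μ :=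
    memLp_finsetSum _ fun k _ => memLp_mul_sum hL4 k _
  calc _ ≤ 2 * ∫ ω, (1 / (Fintype.card ι : ℝ) * ∑ i, (Y i ω ^ 2 - v)) ^ 2 ∂μ
        + 2 * ∫ ω, (2 / ((Fintype.card ι : ℝ) * (Fintype.card ι - 1))
          * ∑ k, Y k ω * ∑ i ∈ Iio k, Y i ω) ^ 2 ∂μ :=
        integral_sub_sq_le (hA.const_mul _) (hP.const_mul _)
    _ = 2 * (1 / (Fintype.card ι : ℝ)) ^ 2 * (Fintype.card ι * (β - v ^ 2))
        + 2 * (2 / ((Fintype.card ι : ℝ) * (Fintype.card ι - 1))) ^ 2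
          * (v ^ 2 * ((Fintype.card ι : ℝ) * (Fintype.card ι - 1) / 2)) := by
        simp_rw [mul_pow]
        rw [integral_const_mul, integral_const_mul, integral_sum_sq_sub_sq _ hindep hL4 hv,
          integral_sum_mul_sum_Iio_sq hindep hL4 h0 hv, ← two_mul_sum_card_Iio]
        simp only [hβ, sum_sub_distrib, sum_const, card_univ, nsmul_eq_mul,
          mul_div_cancel_left₀ _ (two_ne_zero' ℝ)]
        ring
    _ ≤ 4 / Fintype.card ι * β := by
        have hdiv : 2 * v ^ 2 / ((Fintype.card ι : ℝ) - 1) ≤ 2 * v ^ 2 :=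
          div_le_self (by positivity) (by linarith)
        field_simp
        linarith

end IndependentFamily

end SampleVariance

/-- Moment bound for the sample variance: for i.i.d. real random variables
`X_1,…,X_n` (`n ≥ 2`) with finite fourth moment, mean `m` and variance `v`, the
sample variance `s² = (1/(n-1)) Σ (X_i − X̄)²` satisfies
`E[(s² − v)²] ≤ (4/n)·E[(X_1 − m)⁴]`. -/
theorem stmt_8 {Ω : Type*} [MeasurableSpace Ω] (μ : Measure Ω) [IsProbabilityMeasure μ]
    (n : ℕ) (hn : 2 ≤ n) (X : Fin n → Ω → ℝ)
    (hindep : iIndepFun X μ)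
    (hident : ∀ i j, IdentDistrib (X i) (X j) μ μ)
    (hL4 : ∀ i, MemLp (X i) 4 μ)
    (m v : ℝ)
    (hm : ∀ i, ∫ ω, X i ω ∂μ = m)
    (hv : ∀ i, ∫ ω, (X i ω - m) ^ 2 ∂μ = v) :
    ∫ ω, ((1 / ((n : ℝ) - 1)) * ∑ i, (X i ω - (1 / (n : ℝ)) * ∑ j, X j ω) ^ 2 - v) ^ 2 ∂μ
      ≤ (4 / n) * ∫ ω, (X ⟨0, by omega⟩ ω - m) ^ 4 ∂μ := by
  let Y : Fin n → Ω → ℝ := fun i ω => X i ω - m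
  have hcard : 2 ≤ Fintype.card (Fin n) := by simpa using hn
  have hindepY : iIndepFun Y μ := hindep.comp (fun _ x => x - m) fun _ => measurable_id.sub_const m
  have hL4Y : ∀ i, MemLp (Y i) 4 μ := fun i => (hL4 i).sub (memLp_const m)
  have h0 : ∀ i, ∫ ω, Y i ω ∂μ = 0 := fun i => by
    simp [Y, integral_sub ((hL4 i).integrable (by norm_num)) (integrable_const m), hm i]
  have hβ : ∀ i, ∫ ω, Y i ω ^ 4 ∂μ = ∫ ω, (X ⟨0, by omega⟩ ω - m) ^ 4 ∂μ := fun i =>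
    ((hident i _).comp (u := fun x => (x - m) ^ 4) (by fun_prop)).integral_eq
  have hbound := integral_hoeffding_decomposition_sq_le hcard hindepY hL4Y h0 hv hβ
  simp only [Fintype.card_fin] at hbound
  refine le_of_eq_of_le (congrArg (integral μ) (funext fun ω => ?_)) hbound
  have hdecomp := sampleVariance_sub_eq_hoeffding_decomposition hcard (fun i => X i ω) m v
  simp only [Fintype.card_fin] at hdecomp
  rw [hdecomp]
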